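/- arXiv:2510.13987 — 2 statements merged into one kernel-verified Lean document; each statement's English description precedes it below -/
import Mathlib

section
/- Let n, M ≥ 1 and let h_1, …, h_M : {0,1}^n → ℝ be functions with h_m(b) ≥ 0 for all b and m. Define h_max(b) = max_{1≤m≤M} h_m(b) and h_(p)(b) = ∑_{m=1}^M h_m(b)^p for a natural number p ≥ 1. Let λ_g = min_{b} h_max(b) and suppose λ_g > 0 and that h_max is not constant; let λ_e = min { h_max(b) : b ∈ {0,1}^n, h_max(b) > λ_g } be the second-smallest attained value. If M · λ_g^p < λ_e^p, then every minimizer b* of h_(p) over {0,1}^n satisfies h_max(b*) = λ_g; that is, the minimizers of h_(p) are minimizers of h_max. -/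
/-!
If a minimizer `b*` of `h_(p)` had `h_max b* > λ_g`, then `h_max b* ≥ λ_e`, so
`h_(p) b* ≥ h_max b* ^ p ≥ λ_e ^ p`; but at a minimizer `b₀` of `h_max` every term is at most
`λ_g ^ p`, so `h_(p) b₀ ≤ M λ_g ^ p < λ_e ^ p`, contradicting the minimality of `b*`.
-/

namespace Finset

variable {ι R : Type*} [CommSemiring R] [LinearOrder R] [IsStrictOrderedRing R]
  {s : Finset ι} (hs : s.Nonempty) {f : ι → R}

theorem pow_sup'_le_sum_pow (hf : ∀ i ∈ s, 0 ≤ f i) (p : ℕ) :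
    s.sup' hs f ^ p ≤ ∑ i ∈ s, f i ^ p := by
  obtain ⟨i, hi, hmax⟩ := s.exists_mem_eq_sup' hs f
  rw [hmax]
  exact single_le_sum (fun j hj => pow_nonneg (hf j hj) p) hi

theorem sum_pow_le_card_mul_pow_sup' (hf : ∀ i ∈ s, 0 ≤ f i) (p : ℕ) :
    ∑ i ∈ s, f i ^ p ≤ #s * s.sup' hs f ^ p := by
  rw [← nsmul_eq_mul]
  exact sum_le_card_nsmul s _ _ fun i hi => pow_le_pow_left₀ (hf i hi) (le_sup' f hi) p

end Finset

theorem stmt_2_general (n M p : ℕ) (hM : 1 ≤ M)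
    (h : Fin M → (Fin n → Bool) → ℝ) (hpos : ∀ m b, 0 ≤ h m b)
    (hmax : (Fin n → Bool) → ℝ)
    (hmaxdef : ∀ b, hmax b =
      Finset.univ.sup' ⟨⟨0, hM⟩, Finset.mem_univ _⟩ (fun m => h m b))
    (lamg lame : ℝ)
    (hg : IsLeast {x : ℝ | ∃ b : Fin n → Bool, hmax b = x} lamg)
    (hgpos : 0 < lamg)
    (he : IsLeast {x : ℝ | (∃ b : Fin n → Bool, hmax b = x) ∧ lamg < x} lame)
    (hcond : (M : ℝ) * lamg ^ p < lame ^ p)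
    (bstar : Fin n → Bool)
    (hmin : ∀ b : Fin n → Bool, ∑ m, h m bstar ^ p ≤ ∑ m, h m b ^ p) :
    hmax bstar = lamg := by
  by_contra hne
  obtain ⟨b₀, hb₀⟩ := hg.1
  have hgt : lamg < hmax bstar := (hg.2 ⟨bstar, rfl⟩).lt_of_ne' hne
  have hge : lame ≤ hmax bstar := he.2 ⟨⟨bstar, rfl⟩, hgt⟩
  have hlame : 0 ≤ lame := hgpos.le.trans he.1.2.le
  have hpos' : ∀ b, ∀ m ∈ Finset.univ, 0 ≤ h m b := fun b m _ => hpos m b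
  have : lame ^ p < lame ^ p :=
    calc lame ^ p ≤ hmax bstar ^ p := pow_le_pow_left₀ hlame hge p
      _ ≤ ∑ m, h m bstar ^ p := by
        rw [hmaxdef]; exact Finset.pow_sup'_le_sum_pow _ (hpos' bstar) p
      _ ≤ ∑ m, h m b₀ ^ p := hmin b₀
      _ ≤ M * hmax b₀ ^ p := by
        rw [hmaxdef]
        simpa using Finset.sum_pow_le_card_mul_pow_sup' _ (hpos' b₀) p
      _ = M * lamg ^ p := by rw [hb₀]
      _ < lame ^ p := hcond
  exact lt_irrefl _ this

/-- Minima-alignment guarantee: if `M·λ_g^p < λ_e^p` (with `λ_g` the minimum of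
`h_max` and `λ_e` its second-smallest attained value), then every minimizer of
`h_(p) = ∑_m h_m^p` is a minimizer of `h_max`. -/
theorem stmt_2 (n M p : ℕ) (hn : 1 ≤ n) (hM : 1 ≤ M) (hp : 1 ≤ p)
    (h : Fin M → (Fin n → Bool) → ℝ) (hpos : ∀ m b, 0 ≤ h m b)
    (hmax : (Fin n → Bool) → ℝ)
    (hmaxdef : ∀ b, hmax b =
      Finset.univ.sup' ⟨⟨0, hM⟩, Finset.mem_univ _⟩ (fun m => h m b))
    (lamg lame : ℝ)
    (hg : IsLeast {x : ℝ | ∃ b : Fin n → Bool, hmax b = x} lamg)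
    (hgpos : 0 < lamg)
    (hnotconst : ∃ b : Fin n → Bool, hmax b ≠ lamg)
    (he : IsLeast {x : ℝ | (∃ b : Fin n → Bool, hmax b = x) ∧ lamg < x} lame)
    (hcond : (M : ℝ) * lamg ^ p < lame ^ p)
    (bstar : Fin n → Bool)
    (hmin : ∀ b : Fin n → Bool, ∑ m, h m bstar ^ p ≤ ∑ m, h m b ^ p) :
    hmax bstar = lamg :=
  stmt_2_general n M p hM h hpos hmax hmaxdef lamg lame hg hgpos he hcond bstar hmin
end

section
/- Let n, M ≥ 1, let h : {0,1}^n → ℝ and g_1, …, g_M : {0,1}^n → ℝ, and suppose the feasible set F = { b ∈ {0,1}^n : g_m(b) ≥ 0 for all m = 1, …, M } is nonempty. For γ ∈ ℝ define H_γ(b) = max { h(b), h(b) − γ·g_1(b), …, h(b) − γ·g_M(b) }. Then there exists γ_0 ≥ 0 such that for every γ > γ_0: min_{b ∈ {0,1}^n} H_γ(b) = min_{b ∈ F} h(b), and the set of minimizers of H_γ over {0,1}^n equals the set of minimizers of h over F. -/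
/-!
For `γ ≥ 0` the penalized objective `H_γ` agrees with `h` on feasible points, while at an
infeasible point some `g_m` is negative, so `H_γ ≥ h - γ g_m → ∞` as `γ → ∞`. Since there are
finitely many points, for all large `γ` every infeasible point has `H_γ > min_F h`, and then
`H_γ` and `h|_F` have the same minimum and the same minimizers.
-/

open Finset Filter

section Penalty

variable {α ι : Type*} [Fintype ι]

def penalizedMax (h : α → ℝ) (g : ι → α → ℝ) (hι : (univ : Finset ι).Nonempty)
    (γ : ℝ) (b : α) : ℝ :=
  max (h b) (univ.sup' hι fun m => h b - γ * g m b)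

variable (h : α → ℝ) (g : ι → α → ℝ) (hι : (univ : Finset ι).Nonempty)

theorem penalizedMax_eq_of_feasible {γ : ℝ} (hγ : 0 ≤ γ) {b : α} (hb : ∀ m, 0 ≤ g m b) :
    penalizedMax h g hι γ b = h b :=
  max_eq_left <| sup'_le _ _ fun m _ => sub_le_self _ (mul_nonneg hγ (hb m))

theorem tendsto_penalizedMax_atTop_of_not_feasible {b : α} (hb : ¬∀ m, 0 ≤ g m b) :
    Tendsto (fun γ => penalizedMax h g hι γ b) atTop atTop := by
  obtain ⟨m, hm⟩ := not_forall.1 hb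
  have hlin : Tendsto (fun γ : ℝ => h b - γ * g m b) atTop atTop := by
    simpa only [sub_eq_add_neg, ← mul_neg, id_eq] using tendsto_atTop_add_const_left _ (h b)
      (tendsto_id.atTop_mul_const (neg_pos.2 (not_le.1 hm)))
  refine tendsto_atTop_mono (fun γ => ?_) hlin
  exact (le_sup' (fun m => h b - γ * g m b) (mem_univ m)).trans (le_max_right _ _)

theorem eventually_lt_penalizedMax_of_not_feasible [Finite α] (c : ℝ) :
    ∀ᶠ γ in atTop, ∀ b, ¬(∀ m, 0 ≤ g m b) → c < penalizedMax h g hι γ b :=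
  eventually_all.2 fun _ => eventually_imp_distrib_left.2 fun hb =>
    (tendsto_penalizedMax_atTop_of_not_feasible h g hι hb).eventually_gt_atTop c

end Penalty

theorem inf'_univ_eq_and_forall_le_iff_of_eqOn {α β : Type*} [Fintype α] [Nonempty α]
    [LinearOrder β] {F : Finset α} (hF : F.Nonempty) {h H : α → β}
    (heq : ∀ b ∈ F, H b = h b) (hgt : ∀ b ∉ F, F.inf' hF h < H b) :
    univ.inf' univ_nonempty H = F.inf' hF h ∧
      ∀ b, (∀ b', H b ≤ H b') ↔ b ∈ F ∧ ∀ b' ∈ F, h b ≤ h b' := by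
  obtain ⟨b₀, hb₀F, hb₀⟩ := exists_mem_eq_inf' hF h
  have hge : ∀ b, F.inf' hF h ≤ H b := fun b => by
    by_cases hb : b ∈ F
    · exact heq b hb ▸ inf'_le h hb
    · exact (hgt b hb).le
  have hHb₀ : H b₀ = F.inf' hF h := (heq b₀ hb₀F).trans hb₀.symm
  refine ⟨le_antisymm (hHb₀ ▸ inf'_le H (mem_univ b₀)) (le_inf' _ _ fun b _ => hge b),
    fun b => ⟨fun hmin => ?_, fun ⟨hbF, hopt⟩ b' => ?_⟩⟩
  · have hle : H b ≤ F.inf' hF h := hHb₀ ▸ hmin b₀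
    have hbF : b ∈ F := by
      by_contra hb
      exact (hle.trans_lt (hgt b hb)).false
    exact ⟨hbF, fun b' hb' => (heq b hbF ▸ hle).trans (inf'_le h hb')⟩
  · calc H b = h b := heq b hbF
      _ ≤ h b₀ := hopt b₀ hb₀F
      _ = F.inf' hF h := hb₀.symm
      _ ≤ H b' := hge b'

theorem stmt_3_general (n M : ℕ) (hM : 1 ≤ M)
    (h : (Fin n → Bool) → ℝ) (g : Fin M → (Fin n → Bool) → ℝ)
    (hF : (Finset.univ.filter (fun b : Fin n → Bool => ∀ m, 0 ≤ g m b)).Nonempty) :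
    ∃ γ0 : ℝ, 0 ≤ γ0 ∧ ∀ γ : ℝ, γ0 < γ →
      (Finset.univ.inf' Finset.univ_nonempty
          (fun b : Fin n → Bool =>
            max (h b)
              (Finset.univ.sup' ⟨⟨0, hM⟩, Finset.mem_univ _⟩
                (fun m => h b - γ * g m b)))
        = (Finset.univ.filter (fun b : Fin n → Bool => ∀ m, 0 ≤ g m b)).inf' hF h)
      ∧ ∀ b : Fin n → Bool,
          ((∀ b' : Fin n → Bool,
              max (h b)
                (Finset.univ.sup' ⟨⟨0, hM⟩, Finset.mem_univ _⟩
                  (fun m => h b - γ * g m b))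
              ≤ max (h b')
                (Finset.univ.sup' ⟨⟨0, hM⟩, Finset.mem_univ _⟩
                  (fun m => h b' - γ * g m b')))
            ↔ ((∀ m, 0 ≤ g m b) ∧
                ∀ b' : Fin n → Bool, (∀ m, 0 ≤ g m b') → h b ≤ h b')) := by
  have hι : (univ : Finset (Fin M)).Nonempty := ⟨⟨0, hM⟩, mem_univ _⟩
  obtain ⟨γ1, hγ1⟩ := eventually_atTop.1
    (eventually_lt_penalizedMax_of_not_feasible h g hι ((univ.filter _).inf' hF h))
  refine ⟨max γ1 0, le_max_right _ _, fun γ hγ => ?_⟩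
  have hγ0 : 0 ≤ γ := (le_max_right _ _).trans hγ.le
  have key := inf'_univ_eq_and_forall_le_iff_of_eqOn hF
    (fun b hb => penalizedMax_eq_of_feasible h g hι hγ0 (by simpa using hb))
    (fun b hb => hγ1 γ ((le_max_left _ _).trans hγ.le) b (by simpa using hb))
  simpa only [penalizedMax, mem_filter, mem_univ, true_and] using key

/-- Proposition 2: an inequality-constrained binary optimization problem is, for
sufficiently large penalty `γ`, equivalent (in optimal value and optimizer set)
to the unconstrained minimization of the maximum of the `M+1` objectives
`h, h - γ·g_1, …, h - γ·g_M`. -/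
theorem stmt_3 (n M : ℕ) (hn : 1 ≤ n) (hM : 1 ≤ M)
    (h : (Fin n → Bool) → ℝ) (g : Fin M → (Fin n → Bool) → ℝ)
    (hF : (Finset.univ.filter (fun b : Fin n → Bool => ∀ m, 0 ≤ g m b)).Nonempty) :
    ∃ γ0 : ℝ, 0 ≤ γ0 ∧ ∀ γ : ℝ, γ0 < γ →
      (Finset.univ.inf' Finset.univ_nonempty
          (fun b : Fin n → Bool =>
            max (h b)
              (Finset.univ.sup' ⟨⟨0, hM⟩, Finset.mem_univ _⟩
                (fun m => h b - γ * g m b)))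
        = (Finset.univ.filter (fun b : Fin n → Bool => ∀ m, 0 ≤ g m b)).inf' hF h)
      ∧ ∀ b : Fin n → Bool,
          ((∀ b' : Fin n → Bool,
              max (h b)
                (Finset.univ.sup' ⟨⟨0, hM⟩, Finset.mem_univ _⟩
                  (fun m => h b - γ * g m b))
              ≤ max (h b')
                (Finset.univ.sup' ⟨⟨0, hM⟩, Finset.mem_univ _⟩
                  (fun m => h b' - γ * g m b')))
            ↔ ((∀ m, 0 ≤ g m b) ∧
                ∀ b' : Fin n → Bool, (∀ m, 0 ≤ g m b') → h b ≤ h b')) :=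
  stmt_3_general n M hM h g hF
end
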